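/- Let α₁, α₂, β₁, β₂, δ, γ be positive real numbers. There exist rank-one orthogonal projections P₁, Q₁, R on ℂ² (with its standard inner product) such that the family {P₁, Q₁, R} is irreducible and α₁·P₁ + α₂·I + β₁·Q₁ + β₂·I + δ·R = γ·I, if and only if α₁ + α₂ + β₂ < γ, α₂ + β₁ + β₂ < γ, α₂ + β₂ + δ < γ, and α₁ + 2α₂ + β₁ + 2β₂ + δ = 2γ. (This describes all weights with which the unique indecomposable representation of the primitive poset (2,2,1) with dimension vector (1,2;1,2;1;2) can be unitarized; here the second members P₂, Q₂ of the two chains have rank 2, i.e., P₂ = Q₂ = I.) -/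

import Mathlib

noncomputable section

/-- An orthogonal projection on `ℂⁿ` (with its standard inner product): a symmetric
idempotent linear operator. -/
def IsOrthProj {n : ℕ}
    (p : EuclideanSpace ℂ (Fin n) →ₗ[ℂ] EuclideanSpace ℂ (Fin n)) : Prop :=
  p.IsSymmetric ∧ p ∘ₗ p = p

/-- For orthogonal projections, `p ≤ q` means `pq = qp = p`. -/
def ProjLE {n : ℕ}
    (p q : EuclideanSpace ℂ (Fin n) →ₗ[ℂ] EuclideanSpace ℂ (Fin n)) : Prop :=
  q ∘ₗ p = p ∧ p ∘ₗ q = p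

/-- A family of operators on `ℂⁿ` is irreducible if the only subspaces invariant under
every member of the family are `{0}` and `ℂⁿ`. -/
def IrreducibleFamily {n : ℕ}
    (T : Set (EuclideanSpace ℂ (Fin n) →ₗ[ℂ] EuclideanSpace ℂ (Fin n))) : Prop :=
  ∀ W : Submodule ℂ (EuclideanSpace ℂ (Fin n)),
    (∀ f ∈ T, W.map f ≤ W) → W = ⊥ ∨ W = ⊤

/-!
Rank-one orthogonal projections have trace one, so taking the trace of
`α₁P₁ + β₁Q₁ + δR = cI`, where `c = γ - α₂ - β₂`, gives the linear relation. Testing the same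
relation against a vector `v ≠ 0` in the range of `P₁` gives `(c - α₁)‖v‖² = β₁‖Q₁v‖² + δ‖Rv‖²`,
so `c ≤ α₁` would make `ℂv` invariant under all three projections; by symmetry every weight is
below `c`. Conversely, these inequalities are exactly what is needed to find real unit vectors
`e₁, u, w ∈ ℝ²` with `α₁e₁e₁ᵀ + β₁uuᵀ + δwwᵀ = cI`, and the projections onto them form an
irreducible family because the lines `ℂe₁` and `ℂu` are neither equal nor orthogonal.
-/

open scoped InnerProductSpace
open Module

section General

variable {n : ℕ}

lemma IsOrthProj.isSymmetricProjection
    {P : EuclideanSpace ℂ (Fin n) →ₗ[ℂ] EuclideanSpace ℂ (Fin n)} (hP : IsOrthProj P) :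
    P.IsSymmetricProjection :=
  ⟨hP.2, hP.1⟩

lemma LinearMap.IsSymmetricProjection.isOrthProj
    {P : EuclideanSpace ℂ (Fin n) →ₗ[ℂ] EuclideanSpace ℂ (Fin n)}
    (hP : P.IsSymmetricProjection) : IsOrthProj P :=
  ⟨hP.2, hP.1⟩

lemma LinearMap.IsSymmetricProjection.re_inner_apply_self {E : Type*} [NormedAddCommGroup E]
    [InnerProductSpace ℂ E] {T : E →ₗ[ℂ] E} (hT : T.IsSymmetricProjection) (v : E) :
    (⟪v, T v⟫_ℂ).re = ‖T v‖ ^ 2 := by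
  conv_lhs => rw [← hT.isIdempotentElem, Module.End.mul_apply, ← hT.isSymmetric]
  exact inner_self_eq_norm_sq (𝕜 := ℂ) _

lemma IrreducibleFamily.exists_apply_notMem_span_singleton
    {T : Set (EuclideanSpace ℂ (Fin n) →ₗ[ℂ] EuclideanSpace ℂ (Fin n))}
    (hT : IrreducibleFamily T) (hn : 1 < n) {v : EuclideanSpace ℂ (Fin n)} (hv : v ≠ 0) :
    ∃ f ∈ T, f v ∉ ℂ ∙ v := by
  by_contra! h
  rcases hT (ℂ ∙ v) fun f hf => by
      rw [Submodule.map_span, Set.image_singleton, Submodule.span_singleton_le_iff_mem]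
      exact h f hf with hbot | htop
  · exact hv (Submodule.span_singleton_eq_bot.mp hbot)
  · have := finrank_span_singleton (K := ℂ) hv
    rw [htop, finrank_top, finrank_euclideanSpace_fin] at this
    omega

theorem IrreducibleFamily.lt_of_smul_add_smul_add_smul_eq (hn : 1 < n)
    {P Q R : EuclideanSpace ℂ (Fin n) →ₗ[ℂ] EuclideanSpace ℂ (Fin n)}
    (hirr : IrreducibleFamily {P, Q, R}) (hP : P.IsSymmetricProjection)
    (hQ : Q.IsSymmetricProjection) (hR : R.IsSymmetricProjection) (hP0 : P ≠ 0)
    {a b d c : ℝ} (hb : 0 < b) (hd : 0 < d)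
    (heq : (a : ℂ) • P + (b : ℂ) • Q + (d : ℂ) • R = (c : ℂ) • LinearMap.id) : a < c := by
  obtain ⟨v, hv0, hPv⟩ : ∃ v, v ≠ 0 ∧ P v = v := by
    obtain ⟨u, hu⟩ : ∃ u, P u ≠ 0 := by
      by_contra! h
      exact hP0 (LinearMap.ext h)
    exact ⟨P u, hu, (LinearMap.IsIdempotentElem.mem_range_iff hP.isIdempotentElem).mp
      (LinearMap.mem_range_self P u)⟩
  have hbalance : a * ‖v‖ ^ 2 + b * ‖Q v‖ ^ 2 + d * ‖R v‖ ^ 2 = c * ‖v‖ ^ 2 := by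
    have := congrArg (fun T => (⟪v, T v⟫_ℂ).re) heq
    simp only [LinearMap.add_apply, LinearMap.smul_apply, LinearMap.id_apply, inner_add_right,
      inner_smul_right, Complex.add_re, Complex.re_ofReal_mul, hQ.re_inner_apply_self,
      hR.re_inner_apply_self] at this
    rwa [hPv, show (⟪v, v⟫_ℂ).re = ‖v‖ ^ 2 from inner_self_eq_norm_sq (𝕜 := ℂ) v] at this
  by_contra! hca
  have hQR : b * ‖Q v‖ ^ 2 + d * ‖R v‖ ^ 2 ≤ 0 := by nlinarith [sq_nonneg ‖v‖]
  have hQv : Q v = 0 := by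
    simpa using (show ‖Q v‖ ^ 2 = 0 by nlinarith [sq_nonneg ‖Q v‖, sq_nonneg ‖R v‖])
  have hRv : R v = 0 := by
    simpa using (show ‖R v‖ ^ 2 = 0 by nlinarith [sq_nonneg ‖Q v‖, sq_nonneg ‖R v‖])
  obtain ⟨f, hf, hfv⟩ := hirr.exists_apply_notMem_span_singleton hn hv0
  rcases hf with rfl | rfl | rfl
  · exact hfv (by rw [hPv]; exact Submodule.mem_span_singleton_self v)
  · exact hfv (by rw [hQv]; exact zero_mem _)
  · exact hfv (by rw [hRv]; exact zero_mem _)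

theorem IrreducibleFamily.lt_and_add_eq_of_finrank_range_eq_one (hn : 1 < n)
    {P Q R : EuclideanSpace ℂ (Fin n) →ₗ[ℂ] EuclideanSpace ℂ (Fin n)}
    (hP : IsOrthProj P) (hQ : IsOrthProj Q) (hR : IsOrthProj R)
    (rP : finrank ℂ (LinearMap.range P) = 1) (rQ : finrank ℂ (LinearMap.range Q) = 1)
    (rR : finrank ℂ (LinearMap.range R) = 1) (hirr : IrreducibleFamily {P, Q, R})
    {a b d c : ℝ} (ha : 0 < a) (hb : 0 < b) (hd : 0 < d)
    (heq : (a : ℂ) • P + (b : ℂ) • Q + (d : ℂ) • R = (c : ℂ) • LinearMap.id) :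
    a < c ∧ b < c ∧ d < c ∧ a + b + d = n * c := by
  have htrace {T : EuclideanSpace ℂ (Fin n) →ₗ[ℂ] EuclideanSpace ℂ (Fin n)} (hT : IsOrthProj T)
      (hr : finrank ℂ (LinearMap.range T) = 1) : LinearMap.trace ℂ _ T = 1 := by
    rw [(LinearMap.IsIdempotentElem.isProj_range _
      hT.isSymmetricProjection.isIdempotentElem).trace, hr, Nat.cast_one]
  have hne {T : EuclideanSpace ℂ (Fin n) →ₗ[ℂ] EuclideanSpace ℂ (Fin n)}
      (hr : finrank ℂ (LinearMap.range T) = 1) : T ≠ 0 := fun h0 => by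
    rw [h0, LinearMap.range_zero, finrank_bot] at hr
    exact zero_ne_one hr
  have hsum := congrArg (LinearMap.trace ℂ _) heq
  simp only [map_add, map_smul, htrace hP rP, htrace hQ rQ, htrace hR rR, LinearMap.trace_id,
    finrank_euclideanSpace_fin, smul_eq_mul, mul_one] at hsum
  refine ⟨?_, ?_, ?_, by norm_cast at hsum; linarith⟩
  · exact hirr.lt_of_smul_add_smul_add_smul_eq hn hP.isSymmetricProjection
      hQ.isSymmetricProjection hR.isSymmetricProjection (hne rP) hb hd heq
  · refine IrreducibleFamily.lt_of_smul_add_smul_add_smul_eq hn (by rwa [Set.insert_comm])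
      hQ.isSymmetricProjection hP.isSymmetricProjection hR.isSymmetricProjection (hne rQ) ha hd
      (a := b) (b := a) ?_
    rw [← heq]; abel
  · refine IrreducibleFamily.lt_of_smul_add_smul_add_smul_eq hn
      (by rwa [Set.insert_comm R, Set.pair_comm R]) hR.isSymmetricProjection
      hP.isSymmetricProjection hQ.isSymmetricProjection (hne rR) ha hb (a := d) (b := a) ?_
    rw [← heq]; abel

def lineProj (v : EuclideanSpace ℂ (Fin n)) :
    EuclideanSpace ℂ (Fin n) →ₗ[ℂ] EuclideanSpace ℂ (Fin n) :=
  (ℂ ∙ v).starProjection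

lemma isOrthProj_lineProj (v : EuclideanSpace ℂ (Fin n)) : IsOrthProj (lineProj v) :=
  (Submodule.isSymmetricProjection_starProjection _).isOrthProj

lemma finrank_range_lineProj {v : EuclideanSpace ℂ (Fin n)} (hv : v ≠ 0) :
    finrank ℂ (LinearMap.range (lineProj v)) = 1 := by
  rw [lineProj, Submodule.range_starProjection, finrank_span_singleton hv]

lemma mem_of_starProjection_singleton_apply_mem {E : Type*} [NormedAddCommGroup E]
    [InnerProductSpace ℂ E] {W : Submodule ℂ E} {e z : E} (hez : ⟪e, z⟫_ℂ ≠ 0)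
    (h : (ℂ ∙ e).starProjection z ∈ W) : e ∈ W := by
  have he : e ≠ 0 := by
    rintro rfl
    exact hez (inner_zero_left z)
  rw [Submodule.starProjection_singleton] at h
  exact (W.smul_mem_iff (div_ne_zero hez (by simpa using he))).mp h

theorem irreducibleFamily_of_lineProj_mem
    {T : Set (EuclideanSpace ℂ (Fin n) →ₗ[ℂ] EuclideanSpace ℂ (Fin n))}
    {e u : EuclideanSpace ℂ (Fin n)} (heu : ⟪e, u⟫_ℂ ≠ 0) (hspan : Submodule.span ℂ {e, u} = ⊤)
    (he : lineProj e ∈ T) (hu : lineProj u ∈ T) :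
    IrreducibleFamily T := by
  intro W hW
  have hmem {x z} (hx : lineProj x ∈ T) (hz : z ∈ W) (hxz : ⟪x, z⟫_ℂ ≠ 0) : x ∈ W :=
    mem_of_starProjection_singleton_apply_mem hxz (hW _ hx (Submodule.mem_map_of_mem hz))
  rcases eq_or_ne W ⊥ with hbot | hbot
  · exact Or.inl hbot
  obtain ⟨z, hz, hz0⟩ := Submodule.exists_mem_ne_zero_of_ne_bot hbot
  have heuW : e ∈ W ∧ u ∈ W := by
    by_cases hez : ⟪e, z⟫_ℂ = 0
    · have huz : ⟪u, z⟫_ℂ ≠ 0 := by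
        intro huz
        have : ⊤ ≤ (ℂ ∙ z)ᗮ := by
          rw [← hspan, Submodule.span_le, Set.insert_subset_iff, Set.singleton_subset_iff]
          simp only [SetLike.mem_coe, Submodule.mem_orthogonal_singleton_iff_inner_right]
          exact ⟨inner_eq_zero_symm.mp hez, inner_eq_zero_symm.mp huz⟩
        exact hz0 (inner_self_eq_zero.mp
          (Submodule.mem_orthogonal_singleton_iff_inner_right.mp (this Submodule.mem_top)))
      have huW := hmem hu hz huz
      exact ⟨hmem he huW heu, huW⟩
    · have heW := hmem he hz hez
      exact ⟨heW, hmem hu heW fun h => heu (inner_eq_zero_symm.mp h)⟩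
  right
  rw [eq_top_iff, ← hspan, Submodule.span_le, Set.insert_subset_iff, Set.singleton_subset_iff]
  exact heuW

end General

def realVec2 (p q : ℝ) : EuclideanSpace ℂ (Fin 2) := !₂[(p : ℂ), q]

@[simp] lemma realVec2_apply_zero (p q : ℝ) : realVec2 p q 0 = p := rfl

@[simp] lemma realVec2_apply_one (p q : ℝ) : realVec2 p q 1 = q := rfl

lemma inner_realVec2 (p q : ℝ) (v : EuclideanSpace ℂ (Fin 2)) :
    ⟪realVec2 p q, v⟫_ℂ = p * v 0 + q * v 1 := by
  simp [realVec2, PiLp.inner_apply, Fin.sum_univ_two, mul_comm]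

lemma norm_realVec2 {p q : ℝ} (h : p ^ 2 + q ^ 2 = 1) : ‖realVec2 p q‖ = 1 := by
  simp [EuclideanSpace.norm_eq, Fin.sum_univ_two, realVec2, h]

lemma lineProj_realVec2_apply {p q : ℝ} (h : p ^ 2 + q ^ 2 = 1) (v : EuclideanSpace ℂ (Fin 2)) :
    lineProj (realVec2 p q) v = (p * v 0 + q * v 1) • realVec2 p q := by
  rw [lineProj, ContinuousLinearMap.coe_coe,
    Submodule.starProjection_unit_singleton ℂ (norm_realVec2 h), inner_realVec2]

lemma span_realVec2_pair_eq_top (p : ℝ) {q : ℝ} (hq : q ≠ 0) :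
    Submodule.span ℂ {realVec2 1 0, realVec2 p q} = ⊤ := by
  have hq' : (q : ℂ) ≠ 0 := by exact_mod_cast hq
  refine Submodule.eq_top_iff'.2 fun v =>
    Submodule.mem_span_pair.2 ⟨v 0 - p * v 1 / q, v 1 / q, ?_⟩
  ext i
  fin_cases i
  · simp only [Fin.zero_eta, PiLp.add_apply, PiLp.smul_apply, realVec2_apply_zero,
      Complex.ofReal_one, smul_eq_mul, mul_one]
    ring
  · simp [hq']

lemma exists_unit_frame {a b d c : ℝ} (hac : a < c) (hbc : b < c) (hdc : d < c)
    (hsum : a + b + d = 2 * c) :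
    ∃ p q x y : ℝ, p ≠ 0 ∧ q ≠ 0 ∧ p ^ 2 + q ^ 2 = 1 ∧ x ^ 2 + y ^ 2 = 1 ∧
      a + b * p ^ 2 + d * x ^ 2 = c ∧ b * (p * q) + d * (x * y) = 0 ∧
      b * q ^ 2 + d * y ^ 2 = c := by
  obtain ⟨A, B, D, hA, hB, hD, rfl, rfl, rfl, rfl⟩ : ∃ A B D : ℝ, 0 < A ∧ 0 < B ∧ 0 < D ∧
      a = B + D ∧ b = A + D ∧ d = A + B ∧ c = A + B + D :=
    ⟨c - a, c - b, c - d, by linarith, by linarith, by linarith, by linarith, by linarith,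
      by linarith, by linarith⟩
  -- The diagonal equations fix `p²`, `q²` and `x²`; the off-diagonal one then fixes `y`.
  set p := √(A * B / ((B + D) * (A + D)))
  set q := √((A + B + D) * D / ((B + D) * (A + D)))
  set x := √(A * D / ((B + D) * (A + B)))
  have hp : p ^ 2 = A * B / ((B + D) * (A + D)) := Real.sq_sqrt (by positivity)
  have hq : q ^ 2 = (A + B + D) * D / ((B + D) * (A + D)) := Real.sq_sqrt (by positivity)
  have hx : x ^ 2 = A * D / ((B + D) * (A + B)) := Real.sq_sqrt (by positivity)
  have hx0 : x ≠ 0 := by positivity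
  refine ⟨p, q, x, -((A + D) * p * q) / ((A + B) * x), by positivity, by positivity, ?_, ?_, ?_,
    by field_simp; ring, ?_⟩
  all_goals
    field_simp
    simp only [hp, hq, hx, show x ^ 4 = (x ^ 2) ^ 2 by ring]
    field_simp
    ring

theorem exists_irreducible_finrank_range_eq_one {a b d c : ℝ} (hac : a < c) (hbc : b < c)
    (hdc : d < c) (hsum : a + b + d = 2 * c) :
    ∃ P Q R : EuclideanSpace ℂ (Fin 2) →ₗ[ℂ] EuclideanSpace ℂ (Fin 2),
      IsOrthProj P ∧ IsOrthProj Q ∧ IsOrthProj R ∧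
      finrank ℂ (LinearMap.range P) = 1 ∧ finrank ℂ (LinearMap.range Q) = 1 ∧
      finrank ℂ (LinearMap.range R) = 1 ∧ IrreducibleFamily {P, Q, R} ∧
      (a : ℂ) • P + (b : ℂ) • Q + (d : ℂ) • R = (c : ℂ) • LinearMap.id := by
  obtain ⟨p, q, x, y, hp, hq, hpq, hxy, h₀₀, h₀₁, h₁₁⟩ := exists_unit_frame hac hbc hdc hsum
  have hne {s t : ℝ} (h : s ^ 2 + t ^ 2 = 1) : realVec2 s t ≠ 0 := fun h0 => by
    simpa [h0] using norm_realVec2 h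
  refine ⟨lineProj (realVec2 1 0), lineProj (realVec2 p q), lineProj (realVec2 x y),
    isOrthProj_lineProj _, isOrthProj_lineProj _, isOrthProj_lineProj _,
    finrank_range_lineProj (hne (by norm_num)), finrank_range_lineProj (hne hpq),
    finrank_range_lineProj (hne hxy),
    irreducibleFamily_of_lineProj_mem (by simpa [inner_realVec2] using hp)
      (span_realVec2_pair_eq_top p hq) (by simp) (by simp), ?_⟩
  have e₀₀ : (a : ℂ) + b * p ^ 2 + d * x ^ 2 = c := by exact_mod_cast h₀₀
  have e₀₁ : (b : ℂ) * (p * q) + d * (x * y) = 0 := by exact_mod_cast h₀₁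
  have e₁₁ : (b : ℂ) * q ^ 2 + d * y ^ 2 = c := by exact_mod_cast h₁₁
  ext v i
  fin_cases i <;>
    simp only [LinearMap.add_apply, LinearMap.smul_apply, LinearMap.id_apply, PiLp.add_apply,
      PiLp.smul_apply, smul_eq_mul, lineProj_realVec2_apply hpq, lineProj_realVec2_apply hxy,
      lineProj_realVec2_apply (by norm_num : (1 : ℝ) ^ 2 + 0 ^ 2 = 1), Fin.zero_eta, Fin.mk_one,
      realVec2_apply_zero, realVec2_apply_one, Complex.ofReal_one, Complex.ofReal_zero]
  · linear_combination v 0 * e₀₀ + v 1 * e₀₁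
  · linear_combination v 0 * e₀₁ + v 1 * e₁₁

theorem unitarization_221_dim2_general (α₁ α₂ β₁ β₂ δ γ : ℝ)
    (hα₁ : 0 < α₁) (hβ₁ : 0 < β₁) (hδ : 0 < δ) :
    (∃ P₁ Q₁ R : EuclideanSpace ℂ (Fin 2) →ₗ[ℂ] EuclideanSpace ℂ (Fin 2),
        IsOrthProj P₁ ∧ IsOrthProj Q₁ ∧ IsOrthProj R ∧
        Module.finrank ℂ (LinearMap.range P₁) = 1 ∧
        Module.finrank ℂ (LinearMap.range Q₁) = 1 ∧
        Module.finrank ℂ (LinearMap.range R) = 1 ∧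
        IrreducibleFamily {P₁, Q₁, R} ∧
        (α₁ : ℂ) • P₁ + (α₂ : ℂ) • (LinearMap.id : EuclideanSpace ℂ (Fin 2) →ₗ[ℂ] _)
            + (β₁ : ℂ) • Q₁ + (β₂ : ℂ) • (LinearMap.id : EuclideanSpace ℂ (Fin 2) →ₗ[ℂ] _)
            + (δ : ℂ) • R
          = (γ : ℂ) • (LinearMap.id : EuclideanSpace ℂ (Fin 2) →ₗ[ℂ] _)) ↔
      (α₁ + α₂ + β₂ < γ ∧ α₂ + β₁ + β₂ < γ ∧ α₂ + β₂ + δ < γ ∧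
        α₁ + 2 * α₂ + β₁ + 2 * β₂ + δ = 2 * γ) := by
  have hshift (P Q R : EuclideanSpace ℂ (Fin 2) →ₗ[ℂ] EuclideanSpace ℂ (Fin 2)) :
      (α₁ : ℂ) • P + (α₂ : ℂ) • LinearMap.id + (β₁ : ℂ) • Q + (β₂ : ℂ) • LinearMap.id
          + (δ : ℂ) • R = (γ : ℂ) • LinearMap.id ↔
        (α₁ : ℂ) • P + (β₁ : ℂ) • Q + (δ : ℂ) • R = ((γ - α₂ - β₂ : ℝ) : ℂ) • LinearMap.id := by
    push_cast
    constructor <;> intro h <;> linear_combination (norm := module) h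
  simp only [hshift]
  constructor
  · rintro ⟨P, Q, R, hP, hQ, hR, rP, rQ, rR, hirr, heq⟩
    obtain ⟨h₁, h₂, h₃, h₄⟩ :=
      hirr.lt_and_add_eq_of_finrank_range_eq_one one_lt_two hP hQ hR rP rQ rR hα₁ hβ₁ hδ heq
    push_cast at h₄
    exact ⟨by linarith, by linarith, by linarith, by linarith⟩
  · rintro ⟨h₁, h₂, h₃, h₄⟩
    exact exists_irreducible_finrank_range_eq_one (by linarith) (by linarith) (by linarith)
      (by linarith)

/-- The weights with which the unique indecomposable representation of the primitive poset
`(2,2,1)` with dimension vector `(1,2;1,2;1;2)` can be unitarized (the second chain members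
`P₂`, `Q₂` have rank 2, i.e. `P₂ = Q₂ = I`): irreducible systems with
`α₁P₁ + α₂I + β₁Q₁ + β₂I + δR = γI` exist iff `α₁+α₂+β₂ < γ`, `α₂+β₁+β₂ < γ`,
`α₂+β₂+δ < γ`, `α₁+2α₂+β₁+2β₂+δ = 2γ`. -/
theorem unitarization_221_dim2 (α₁ α₂ β₁ β₂ δ γ : ℝ)
    (hα₁ : 0 < α₁) (hα₂ : 0 < α₂) (hβ₁ : 0 < β₁) (hβ₂ : 0 < β₂)
    (hδ : 0 < δ) (hγ : 0 < γ) :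
    (∃ P₁ Q₁ R : EuclideanSpace ℂ (Fin 2) →ₗ[ℂ] EuclideanSpace ℂ (Fin 2),
        IsOrthProj P₁ ∧ IsOrthProj Q₁ ∧ IsOrthProj R ∧
        Module.finrank ℂ (LinearMap.range P₁) = 1 ∧
        Module.finrank ℂ (LinearMap.range Q₁) = 1 ∧
        Module.finrank ℂ (LinearMap.range R) = 1 ∧
        IrreducibleFamily {P₁, Q₁, R} ∧
        (α₁ : ℂ) • P₁ + (α₂ : ℂ) • (LinearMap.id : EuclideanSpace ℂ (Fin 2) →ₗ[ℂ] _)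
            + (β₁ : ℂ) • Q₁ + (β₂ : ℂ) • (LinearMap.id : EuclideanSpace ℂ (Fin 2) →ₗ[ℂ] _)
            + (δ : ℂ) • R
          = (γ : ℂ) • (LinearMap.id : EuclideanSpace ℂ (Fin 2) →ₗ[ℂ] _)) ↔
      (α₁ + α₂ + β₂ < γ ∧ α₂ + β₁ + β₂ < γ ∧ α₂ + β₂ + δ < γ ∧
        α₁ + 2 * α₂ + β₁ + 2 * β₂ + δ = 2 * γ) :=
  unitarization_221_dim2_general α₁ α₂ β₁ β₂ δ γ hα₁ hβ₁ hδ
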